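/- If a difference cover argument applies (factors of length ≥ ℓ contain a synchronized cover position), then LCF_k(X,Y) ≥ ℓ implies LCF_k(X,Y) = max over p+q=k of max over (U₁,U₂) ∈ Pairs_ℓ(X), (V₁,V₂) ∈ Pairs_ℓ(Y) of LCP_p(U₁,V₁) + LCP_q(U₂,V₂). -/
import Mathlib

/-- Hamming distance between the aligned parts of two lists. -/
def hdistL {α : Type*} [DecidableEq α] (A B : List α) : ℕ :=
  (A.zip B).countP (fun pr => decide (pr.1 ≠ pr.2))

/-- Longest common prefix with at most `d` mismatches. -/
def LCPd {α : Type*} [DecidableEq α] (d : ℕ) (U V : List α) : ℕ :=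
  Nat.findGreatest (fun p => hdistL (U.take p) (V.take p) ≤ d) (min U.length V.length)

/-- `m` is the length of a common factor of `X` and `Y` with at most `k` mismatches. -/
def IsCF {α : Type*} [DecidableEq α] (k : ℕ) (X Y : List α) (m : ℕ) : Prop :=
  ∃ i j : ℕ, i + m ≤ X.length ∧ j + m ≤ Y.length ∧
    hdistL ((X.drop i).take m) ((Y.drop j).take m) ≤ k

/-- `LCF k X Y`: the maximal length of a pair of factors of `X` and `Y` (one of each)
with Hamming distance at most `k`. -/
noncomputable def LCF {α : Type*} [DecidableEq α] (k : ℕ) (X Y : List α) : ℕ :=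
  sSup {m | IsCF k X Y m}

/-- `Pairs_ℓ(S)` built from the (1-indexed) positions of a cover `Cov`:
pairs `((S[1..i−1])^R, S[i..])` for `i ∈ Cov ∩ [1..|S|]`. -/
def PairsOf {α : Type*} (Cov : Set ℕ) (S : List α) : Set (List α × List α) :=
  {pr | ∃ i ∈ Cov, 1 ≤ i ∧ i ≤ S.length ∧ pr = ((S.take (i - 1)).reverse, S.drop (i - 1))}

lemma zip_reverse_aux {α β : Type*} : ∀ {A : List α} {B : List β}, A.length = B.length →
    A.reverse.zip B.reverse = (A.zip B).reverse := by
  intro A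
  induction A with
  | nil => intro B h; simp [List.length_eq_zero_iff.mp h.symm]
  | cons a A ih =>
    intro B h
    cases B with
    | nil => simp at h
    | cons b B =>
      have h' : A.length = B.length := by simpa using h
      rw [List.reverse_cons, List.reverse_cons, List.zip_append (by simp [h']), ih h']
      simp

lemma hdistL_reverse {α : Type*} [DecidableEq α] {A B : List α} (h : A.length = B.length) :
    hdistL A.reverse B.reverse = hdistL A B := by
  unfold hdistL
  rw [zip_reverse_aux h, List.countP_reverse]

lemma hdistL_append {α : Type*} [DecidableEq α] {A₁ A₂ B₁ B₂ : List α}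
    (h : A₁.length = B₁.length) :
    hdistL (A₁ ++ A₂) (B₁ ++ B₂) = hdistL A₁ B₁ + hdistL A₂ B₂ := by
  unfold hdistL
  rw [List.zip_append h, List.countP_append]

lemma le_LCPd {α : Type*} [DecidableEq α] {d h : ℕ} {U V : List α}
    (h1 : h ≤ U.length) (h2 : h ≤ V.length)
    (h3 : hdistL (U.take h) (V.take h) ≤ d) : h ≤ LCPd d U V :=
  Nat.le_findGreatest (le_min h1 h2) h3

lemma LCPd_spec {α : Type*} [DecidableEq α] (d : ℕ) (U V : List α) :
    hdistL (U.take (LCPd d U V)) (V.take (LCPd d U V)) ≤ d :=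
  Nat.findGreatest_spec (P := fun p => hdistL (U.take p) (V.take p) ≤ d)
    (Nat.zero_le _) (by simp [hdistL])

lemma LCPd_le {α : Type*} [DecidableEq α] (d : ℕ) (U V : List α) :
    LCPd d U V ≤ min U.length V.length :=
  Nat.findGreatest_le _

lemma len_seg {α : Type*} (n t : ℕ) (X : List α) (h : n + t ≤ X.length) :
    ((X.drop n).take t).length = t := by
  simp only [List.length_take, List.length_drop]
  omega

/-- take of a reversed prefix is the reverse of a segment -/
lemma take_rev_prefix {α : Type*} (X : List α) (c a : ℕ) (ha : a ≤ c) (hc : c ≤ X.length) :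
    ((X.take c).reverse).take a = ((X.drop (c - a)).take a).reverse := by
  rw [List.take_reverse]
  congr 1
  rw [List.length_take, min_eq_left hc, List.drop_take]
  congr 1
  omega

/-- Lemma 3, both directions: if `Cov` is an `ℓ`-cover and
`LCF_k(X,Y) ≥ ℓ`, then `LCF_k(X,Y)` is the maximum over `p + q = k`,
`(U₁,U₂) ∈ Pairs_ℓ(X)`, `(V₁,V₂) ∈ Pairs_ℓ(Y)` of `LCP_p(U₁,V₁) + LCP_q(U₂,V₂)`. -/
theorem lcf_eq_max_pair_lcp {α : Type*} [DecidableEq α]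
    (Cov : Set ℕ) (ℓ : ℕ) (X Y : List α) (k : ℕ)
    (hCov : ∀ i j : ℕ, 0 < i → 0 < j → ∃ h : ℕ, h < ℓ ∧ i + h ∈ Cov ∧ j + h ∈ Cov)
    (hLCF : ℓ ≤ LCF k X Y) :
    IsGreatest {v : ℕ | ∃ (p q : ℕ) (U₁ U₂ V₁ V₂ : List α),
        p + q = k ∧ (U₁, U₂) ∈ PairsOf Cov X ∧ (V₁, V₂) ∈ PairsOf Cov Y ∧
        v = LCPd p U₁ V₁ + LCPd q U₂ V₂}
      (LCF k X Y) := by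
  have hbdd : BddAbove {m | IsCF k X Y m} := by
    refine ⟨X.length, fun m hm => ?_⟩
    obtain ⟨i, j, hi, _, _⟩ := hm
    omega
  have hne : {m | IsCF k X Y m}.Nonempty :=
    ⟨0, 0, 0, by simp, by simp, by simp [hdistL]⟩
  have hmem : IsCF k X Y (LCF k X Y) := Nat.sSup_mem hne hbdd
  -- upper bound direction
  have hub : ∀ v ∈ {v : ℕ | ∃ (p q : ℕ) (U₁ U₂ V₁ V₂ : List α),
        p + q = k ∧ (U₁, U₂) ∈ PairsOf Cov X ∧ (V₁, V₂) ∈ PairsOf Cov Y ∧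
        v = LCPd p U₁ V₁ + LCPd q U₂ V₂}, v ≤ LCF k X Y := by
    rintro v ⟨p, q, U₁, U₂, V₁, V₂, hpq, ⟨i, hiC, hi1, hiX, hUeq⟩, ⟨j, hjC, hj1, hjY, hVeq⟩, hv⟩
    rw [Prod.ext_iff] at hUeq hVeq
    obtain ⟨hU1, hU2⟩ := hUeq
    obtain ⟨hV1, hV2⟩ := hVeq
    simp only at hU1 hU2 hV1 hV2
    have hU1len : U₁.length = i - 1 := by rw [hU1]; simp; omega
    have hV1len : V₁.length = j - 1 := by rw [hV1]; simp; omega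
    have hU2len : U₂.length = X.length - (i - 1) := by rw [hU2]; simp
    have hV2len : V₂.length = Y.length - (j - 1) := by rw [hV2]; simp
    have hla := LCPd_le p U₁ V₁
    have hlb := LCPd_le q U₂ V₂
    set a := LCPd p U₁ V₁ with hadef
    set b := LCPd q U₂ V₂ with hbdef
    have hai : a ≤ i - 1 := by rw [← hU1len]; exact le_trans hla (min_le_left _ _)
    have haj : a ≤ j - 1 := by rw [← hV1len]; exact le_trans hla (min_le_right _ _)
    have hbX : b ≤ X.length - (i - 1) := by rw [← hU2len]; exact le_trans hlb (min_le_left _ _)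
    have hbY : b ≤ Y.length - (j - 1) := by rw [← hV2len]; exact le_trans hlb (min_le_right _ _)
    have hda : hdistL (U₁.take a) (V₁.take a) ≤ p := LCPd_spec p U₁ V₁
    have hdb : hdistL (U₂.take b) (V₂.take b) ≤ q := LCPd_spec q U₂ V₂
    have hcf : IsCF k X Y v := by
      refine ⟨i - 1 - a, j - 1 - a, by omega, by omega, ?_⟩
      have hsplitX : (X.drop (i - 1 - a)).take (a + b)
          = (X.drop (i - 1 - a)).take a ++ (X.drop (i - 1)).take b := by
        rw [List.take_add, List.drop_drop, show i - 1 - a + a = i - 1 from by omega]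
      have hsplitY : (Y.drop (j - 1 - a)).take (a + b)
          = (Y.drop (j - 1 - a)).take a ++ (Y.drop (j - 1)).take b := by
        rw [List.take_add, List.drop_drop, show j - 1 - a + a = j - 1 from by omega]
      rw [hv, hsplitX, hsplitY,
        hdistL_append (by rw [len_seg _ _ _ (by omega), len_seg _ _ _ (by omega)])]
      have h1 : hdistL ((X.drop (i - 1 - a)).take a) ((Y.drop (j - 1 - a)).take a) ≤ p := by
        have e1 : U₁.take a = ((X.drop (i - 1 - a)).take a).reverse := by
          rw [hU1, take_rev_prefix X (i - 1) a hai (by omega)]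
        have e2 : V₁.take a = ((Y.drop (j - 1 - a)).take a).reverse := by
          rw [hV1, take_rev_prefix Y (j - 1) a haj (by omega)]
        rw [← hdistL_reverse (by rw [len_seg _ _ _ (by omega), len_seg _ _ _ (by omega)]),
          ← e1, ← e2]
        exact hda
      have h2 : hdistL ((X.drop (i - 1)).take b) ((Y.drop (j - 1)).take b) ≤ q := by
        rw [← hU2, ← hV2]; exact hdb
      omega
    exact le_csSup hbdd hcf
  constructor
  · obtain ⟨i, j, hiX, hjY, hd⟩ := hmem
    obtain ⟨h, hhl, hiC, hjC⟩ := hCov (i + 1) (j + 1) (by omega) (by omega)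
    have hhm : h < LCF k X Y := lt_of_lt_of_le hhl hLCF
    set m := LCF k X Y with hm
    have hsX : (X.drop i).take m = (X.drop i).take h ++ (X.drop (i + h)).take (m - h) := by
      conv_lhs => rw [show m = h + (m - h) by omega]
      rw [List.take_add, List.drop_drop]
    have hsY : (Y.drop j).take m = (Y.drop j).take h ++ (Y.drop (j + h)).take (m - h) := by
      conv_lhs => rw [show m = h + (m - h) by omega]
      rw [List.take_add, List.drop_drop]
    set p := hdistL ((X.drop i).take h) ((Y.drop j).take h) with hp
    have hdsum : p + hdistL ((X.drop (i + h)).take (m - h)) ((Y.drop (j + h)).take (m - h)) ≤ k := by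
      rw [← hdistL_append (by rw [len_seg _ _ _ (by omega), len_seg _ _ _ (by omega)]),
        ← hsX, ← hsY]
      exact hd
    have hpk : p ≤ k := by omega
    refine ⟨p, k - p, (X.take (i + h)).reverse, X.drop (i + h),
      (Y.take (j + h)).reverse, Y.drop (j + h), by omega,
      ⟨i + h + 1, by rw [show i + h + 1 = i + 1 + h by omega]; exact hiC, by omega, by omega,
        by norm_num⟩,
      ⟨j + h + 1, by rw [show j + h + 1 = j + 1 + h by omega]; exact hjC, by omega, by omega,
        by norm_num⟩, ?_⟩
    have key1 : h ≤ LCPd p (X.take (i + h)).reverse (Y.take (j + h)).reverse := by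
      refine le_LCPd (by simp; omega) (by simp; omega) ?_
      have e1 : ((X.take (i + h)).reverse).take h = ((X.drop i).take h).reverse := by
        rw [take_rev_prefix X (i + h) h (by omega) (by omega)]
        congr 3
        omega
      have e2 : ((Y.take (j + h)).reverse).take h = ((Y.drop j).take h).reverse := by
        rw [take_rev_prefix Y (j + h) h (by omega) (by omega)]
        congr 3
        omega
      rw [e1, e2, hdistL_reverse (by rw [len_seg _ _ _ (by omega), len_seg _ _ _ (by omega)])]
    have key2 : m - h ≤ LCPd (k - p) (X.drop (i + h)) (Y.drop (j + h)) := by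
      refine le_LCPd (by simp; omega) (by simp; omega) ?_
      omega
    have hle : m ≤ LCPd p (X.take (i + h)).reverse (Y.take (j + h)).reverse
        + LCPd (k - p) (X.drop (i + h)) (Y.drop (j + h)) := by omega
    have hge := hub _ ⟨p, k - p, (X.take (i + h)).reverse, X.drop (i + h),
      (Y.take (j + h)).reverse, Y.drop (j + h), by omega,
      ⟨i + h + 1, by rw [show i + h + 1 = i + 1 + h by omega]; exact hiC, by omega, by omega,
        by norm_num⟩,
      ⟨j + h + 1, by rw [show j + h + 1 = j + 1 + h by omega]; exact hjC, by omega, by omega,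
        by norm_num⟩, rfl⟩
    omega
  · exact hub
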